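/- For odd n and every real x, ∫_{−∞}^x e^{−t²/2} H_n(t) dt = −2 ∑_{i=0}^{(n−1)/2} (2^i (n−1)!!/(n−1−2i)!!) e^{−x²/2} H_{n−1−2i}(x). -/

import Mathlib

open Real MeasureTheory

/-- Physicists' Hermite polynomial `H n x = (-1)^n e^{x^2} (d/dx)^n e^{-x^2}`. -/
noncomputable def physHermite (n : ℕ) (x : ℝ) : ℝ :=
  (-1)^n * Real.exp (x^2) * iteratedDeriv n (fun y => Real.exp (-y^2)) x

/-- Hermite function `φ k x = (2^k k! √π)^{-1/2} H_k(x) e^{-x²/2}`. -/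
noncomputable def hermiteFn (k : ℕ) (x : ℝ) : ℝ :=
  (Real.sqrt (2^k * k.factorial * Real.sqrt Real.pi))⁻¹ * physHermite k x * Real.exp (-x^2/2)

/-- Confluent hypergeometric function `₁F₁(-k; b; x)` with nonpositive integer first
parameter `-k`; it is the polynomial `∑_{j=0}^{k} ((-k)_j/(b)_j) x^j/j!`, where the rising
factorial `(-k)_j = (-1)^j k!/(k-j)!`. -/
noncomputable def oneF1neg (k : ℕ) (b x : ℝ) : ℝ :=
  ∑ j ∈ Finset.range (k+1),
    ((-1)^j * (k.descFactorial j : ℝ) / ∏ i ∈ Finset.range j, (b + i)) * x^j / (j.factorial : ℝ)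

/-- GUE mean density at σ² = 1/2: partial sum of squared Hermite functions. -/
noncomputable def pGUE (n : ℕ) (x : ℝ) : ℝ := ∑ k ∈ Finset.range n, hermiteFn k x ^ 2

/-- GUE mean density with general variance σ². -/
noncomputable def pGUEvar (n : ℕ) (σ x : ℝ) : ℝ :=
  (σ * Real.sqrt 2)⁻¹ * pGUE n (x / (σ * Real.sqrt 2))

/-- The function τₙ from the GSE/GOE densities. -/
noncomputable def tauFn (n : ℕ) (x : ℝ) : ℝ :=
  Real.sqrt (n/2) * hermiteFn (n-1) x *
    ((1/2) * ∫ t : ℝ, Real.sign (x - t) * hermiteFn n t)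

/-- The function αₙ (for odd n) from the GOE density. -/
noncomputable def alphaFn (n : ℕ) (x : ℝ) : ℝ :=
  hermiteFn (n-1) x / ∫ t : ℝ, hermiteFn (n-1) t

/-!
The integrals `I_k(x) = ∫_{-∞}^x e^{-t²/2} H_k(t) dt` satisfy a two-step recursion. From
`H_{k+2} = 2t H_{k+1} - H_{k+1}'` and `H_{k+1}' = 2(k+1) H_k` one gets
`H_{k+2} = 2(k+1) H_k - 2 (H_{k+1}' - t H_{k+1})`, and `(P' - tP) e^{-t²/2}` is the derivative of
`P e^{-t²/2}`, which vanishes at `-∞`. Hence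
`I_{k+2}(x) = 2(k+1) I_k(x) - 2 e^{-x²/2} H_{k+1}(x)` and `I_1(x) = -2 e^{-x²/2}`; unrolling the
recursion along the odd indices gives the sum, with
`2^i (n-1)!!/(n-1-2i)!! = ∏_{j<i} 2(n-1-2j)` accumulating the factors `2(k+1)`.
-/

open Polynomial

noncomputable def physHermitePoly : ℕ → ℝ[X]
  | 0 => 1
  | n + 1 => C 2 * X * physHermitePoly n - derivative (physHermitePoly n)

@[simp]
lemma physHermitePoly_zero : physHermitePoly 0 = 1 := rfl

lemma physHermitePoly_succ (n : ℕ) :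
    physHermitePoly (n + 1) = C 2 * X * physHermitePoly n - derivative (physHermitePoly n) :=
  rfl

lemma derivative_physHermitePoly_succ (n : ℕ) :
    derivative (physHermitePoly (n + 1)) = C (2 * (n + 1) : ℝ) * physHermitePoly n := by
  induction n with
  | zero => simp [physHermitePoly_succ]
  | succ n ih =>
    rw [physHermitePoly_succ (n + 1)]
    simp only [derivative_sub, derivative_mul, derivative_C, derivative_X, ih]
    rw [physHermitePoly_succ n]
    simp only [map_mul, map_add, map_natCast, map_ofNat, map_one]
    push_cast
    ring

lemma physHermitePoly_add_two (n : ℕ) :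
    physHermitePoly (n + 2) = C (2 * (n + 1) : ℝ) * physHermitePoly n
      - C 2 * (derivative (physHermitePoly (n + 1)) - X * physHermitePoly (n + 1)) := by
  rw [physHermitePoly_succ (n + 1), ← derivative_physHermitePoly_succ, map_ofNat]
  ring

lemma iteratedDeriv_exp_neg_sq (n : ℕ) (x : ℝ) :
    iteratedDeriv n (fun y => Real.exp (-y ^ 2)) x
      = (-1) ^ n * (physHermitePoly n).eval x * Real.exp (-x ^ 2) := by
  induction n generalizing x with
  | zero => simp
  | succ n ih =>
    rw [iteratedDeriv_succ, funext ih]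
    have hexp : HasDerivAt (fun y : ℝ => Real.exp (-y ^ 2)) (Real.exp (-x ^ 2) * -(2 * x)) x :=
      by simpa using ((hasDerivAt_pow 2 x).fun_neg).exp
    rw [((((physHermitePoly n).hasDerivAt x).const_mul ((-1 : ℝ) ^ n)).fun_mul hexp).deriv,
      physHermitePoly_succ]
    simp only [eval_sub, eval_mul, eval_C, eval_X]
    ring

lemma physHermite_eq_eval (n : ℕ) (x : ℝ) : physHermite n x = (physHermitePoly n).eval x := by
  rw [physHermite, iteratedDeriv_exp_neg_sq]
  calc (-1) ^ n * Real.exp (x ^ 2) * ((-1) ^ n * (physHermitePoly n).eval x * Real.exp (-x ^ 2))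
      = ((-1) ^ (n + n) : ℝ) * Real.exp (x ^ 2 + -x ^ 2) * (physHermitePoly n).eval x := by
        rw [pow_add, Real.exp_add]; ring
    _ = (physHermitePoly n).eval x := by simp [Even.neg_one_pow (Even.add_self n)]

lemma integrable_exp_neg_mul_sq_mul_eval {b : ℝ} (hb : 0 < b) (P : ℝ[X]) :
    Integrable (fun t : ℝ => Real.exp (-b * t ^ 2) * P.eval t) := by
  have hmon (i : ℕ) : Integrable (fun t : ℝ => t ^ i * Real.exp (-b * t ^ 2)) := by
    have hi : (-1 : ℝ) < i := by linarith [(i.cast_nonneg : (0 : ℝ) ≤ i)]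
    simpa [Real.rpow_natCast] using integrable_rpow_mul_exp_neg_mul_sq hb hi
  have hsum : (fun t : ℝ => Real.exp (-b * t ^ 2) * P.eval t)
      = fun t => ∑ i ∈ Finset.range (P.natDegree + 1),
          P.coeff i * (t ^ i * Real.exp (-b * t ^ 2)) := by
    funext t
    rw [eval_eq_sum_range, Finset.mul_sum]
    exact Finset.sum_congr rfl fun i _ => by ring
  rw [hsum]
  exact integrable_finsetSum _ fun i _ => (hmon i).const_mul _

lemma integrable_exp_neg_sq_div_two_mul_eval (P : ℝ[X]) :
    Integrable (fun t : ℝ => Real.exp (-t ^ 2 / 2) * P.eval t) := by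
  simpa [neg_div, div_eq_inv_mul] using
    integrable_exp_neg_mul_sq_mul_eval (b := 1 / 2) (by norm_num) P

lemma integral_Iic_exp_mul_eval_derivative_sub_X_mul (P : ℝ[X]) (x : ℝ) :
    ∫ t in Set.Iic x, Real.exp (-t ^ 2 / 2) * (derivative P - X * P).eval t
      = Real.exp (-x ^ 2 / 2) * P.eval x := by
  have hderiv (t : ℝ) : HasDerivAt (fun t : ℝ => Real.exp (-t ^ 2 / 2) * P.eval t)
      (Real.exp (-t ^ 2 / 2) * (derivative P - X * P).eval t) t := by
    refine ((((hasDerivAt_pow 2 t).fun_neg.div_const 2).exp).fun_mul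
      (P.hasDerivAt t)).congr_deriv ?_
    simp only [eval_sub, eval_mul, eval_X, Nat.cast_ofNat]
    ring
  have hint := (integrable_exp_neg_sq_div_two_mul_eval (derivative P - X * P)).integrableOn
    (s := Set.Iic x)
  have hlim := tendsto_zero_of_hasDerivAt_of_integrableOn_Iic (fun t _ => hderiv t) hint
    (integrable_exp_neg_sq_div_two_mul_eval P).integrableOn
  rw [integral_Iic_of_hasDerivAt_of_tendsto' (fun t _ => hderiv t) hint hlim, sub_zero]

lemma integral_Iic_exp_mul_physHermite_one (x : ℝ) :
    ∫ t in Set.Iic x, Real.exp (-t ^ 2 / 2) * physHermite 1 t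
      = -2 * (Real.exp (-x ^ 2 / 2) * physHermite 0 x) := by
  have hpoint (t : ℝ) : Real.exp (-t ^ 2 / 2) * physHermite 1 t
      = -2 * (Real.exp (-t ^ 2 / 2) *
          (derivative (physHermitePoly 0) - X * physHermitePoly 0).eval t) := by
    simp [physHermite_eq_eval, physHermitePoly_succ]
    ring
  simp_rw [hpoint]
  rw [integral_const_mul, integral_Iic_exp_mul_eval_derivative_sub_X_mul, physHermite_eq_eval]

lemma integral_Iic_exp_mul_physHermite_add_two (n : ℕ) (x : ℝ) :
    ∫ t in Set.Iic x, Real.exp (-t ^ 2 / 2) * physHermite (n + 2) t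
      = 2 * (n + 1) * (∫ t in Set.Iic x, Real.exp (-t ^ 2 / 2) * physHermite n t)
        - 2 * (Real.exp (-x ^ 2 / 2) * physHermite (n + 1) x) := by
  have hpoint (t : ℝ) : Real.exp (-t ^ 2 / 2) * physHermite (n + 2) t
      = 2 * (n + 1) * (Real.exp (-t ^ 2 / 2) * physHermite n t)
        - 2 * (Real.exp (-t ^ 2 / 2) *
          (derivative (physHermitePoly (n + 1)) - X * physHermitePoly (n + 1)).eval t) := by
    simp only [physHermite_eq_eval, physHermitePoly_add_two, eval_sub, eval_mul, eval_C]
    ring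
  simp_rw [hpoint]
  rw [integral_sub, integral_const_mul, integral_const_mul,
    integral_Iic_exp_mul_eval_derivative_sub_X_mul, physHermite_eq_eval]
  · simp_rw [physHermite_eq_eval]
    exact ((integrable_exp_neg_sq_div_two_mul_eval _).const_mul _).integrableOn
  · exact ((integrable_exp_neg_sq_div_two_mul_eval _).const_mul _).integrableOn

lemma integral_Iic_exp_mul_physHermite_two_mul_add_one (m : ℕ) (x : ℝ) :
    ∫ t in Set.Iic x, Real.exp (-t ^ 2 / 2) * physHermite (2 * m + 1) t
      = -2 * ∑ i ∈ Finset.range (m + 1),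
          (2 ^ i * ((2 * m).doubleFactorial : ℝ) / ((2 * m - 2 * i).doubleFactorial : ℝ)) *
            Real.exp (-x ^ 2 / 2) * physHermite (2 * m - 2 * i) x := by
  induction m with
  | zero => simp [integral_Iic_exp_mul_physHermite_one]
  | succ m ih =>
    have hterm (i : ℕ) (_ : i ∈ Finset.range (m + 1)) :
        2 ^ (i + 1) * ((2 * (m + 1)).doubleFactorial : ℝ)
            / ((2 * (m + 1) - 2 * (i + 1)).doubleFactorial : ℝ)
            * Real.exp (-x ^ 2 / 2) * physHermite (2 * (m + 1) - 2 * (i + 1)) x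
          = 2 * (2 * m + 1 + 1)
            * (2 ^ i * ((2 * m).doubleFactorial : ℝ) / ((2 * m - 2 * i).doubleFactorial : ℝ)
              * Real.exp (-x ^ 2 / 2) * physHermite (2 * m - 2 * i) x) := by
      rw [show 2 * (m + 1) = 2 * m + 2 by ring, Nat.doubleFactorial_add_two,
        show 2 * m + 2 - 2 * (i + 1) = 2 * m - 2 * i by omega]
      push_cast
      ring
    have hdf : ((2 * (m + 1)).doubleFactorial : ℝ) ≠ 0 := by positivity
    rw [show 2 * (m + 1) + 1 = 2 * m + 1 + 2 by ring, integral_Iic_exp_mul_physHermite_add_two,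
      ih, Finset.sum_range_succ' _ (m + 1), Finset.sum_congr rfl hterm, ← Finset.mul_sum,
      Nat.mul_zero, Nat.sub_zero, pow_zero, one_mul, div_self hdf,
      show 2 * (m + 1) = 2 * m + 1 + 1 by ring]
    push_cast
    ring

theorem integral_Iic_exp_hermite_odd (n : ℕ) (hn : Odd n) (x : ℝ) :
    ∫ t in Set.Iic x, Real.exp (-t^2/2) * physHermite n t =
      -2 * ∑ i ∈ Finset.range ((n-1)/2 + 1),
        (2^i * (Nat.doubleFactorial (n-1) : ℝ) / (Nat.doubleFactorial (n-1-2*i) : ℝ)) *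
          Real.exp (-x^2/2) * physHermite (n-1-2*i) x := by
  obtain ⟨m, rfl⟩ := hn
  rw [show 2 * m + 1 - 1 = 2 * m by omega, show 2 * m / 2 = m by omega]
  exact integral_Iic_exp_mul_physHermite_two_mul_add_one m x
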